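/- Let (u_ε)_{ε∈(0,1]} be a net of smooth maps from X to Y. The following are equivalent: (i) (u_ε)_ε is c-bounded; (ii) for every f ∈ C^∞(Y,ℝ) the net (f∘u_ε)_ε is c-bounded (i.e., for every compact K ⊆ X there exist ε₀ > 0 and a compact K'' ⊆ ℝ with f(u_ε(K)) ⊆ K'' for all ε < ε₀); (iii) for every f ∈ C^∞(Y,ℝ) and every compact K ⊆ X there exists N ∈ ℕ such that sup_{p∈K} |f(u_ε(p))| = O(ε^{-N}) as ε → 0; (iv) for every net (x_ε)_ε of points of X that lies in a fixed compact subset of X for all small ε, the net (u_ε(x_ε))_ε lies in a fixed compact subset of Y for all small ε. -/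

import Mathlib

noncomputable section

open Set Manifold
open scoped ENNReal

/-- Euclidean model space ℝ^n. -/
abbrev Eucl (n : ℕ) : Type := EuclideanSpace ℝ (Fin n)

/-- The index set I = (0,1] of the nets. -/
def Iset : Set ℝ := Set.Ioc 0 1

/-- A (smooth) chart `(V, φ)` on a manifold `X` modelled on `ℝ^n`: a homeomorphism from an
open subset `V ⊆ X` onto an open subset of `ℝ^n`, smooth in both directions. -/
structure MChart (n : ℕ) (X : Type*) [TopologicalSpace X] [ChartedSpace (Eucl n) X] where
  ph : PartialHomeomorph X (Eucl n)
  smooth_toFun : ContMDiffOn (𝓡 n) (𝓡 n) (⊤ : ℕ∞) ph ph.source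
  smooth_invFun : ContMDiffOn (𝓡 n) (𝓡 n) (⊤ : ℕ∞) ph.symm ph.target

/-- c-boundedness of a net of maps. -/
def CBdd {X Y : Type*} [TopologicalSpace X] [TopologicalSpace Y] (u : ℝ → X → Y) : Prop :=
  ∀ K : Set X, IsCompact K → ∃ ε₀ > 0, ∃ K' : Set Y, IsCompact K' ∧
    ∀ ε ∈ Iset, ε < ε₀ → ∀ p ∈ K, u ε p ∈ K'

/-- Compactly supported point nets. -/
def CptSupp {X : Type*} [TopologicalSpace X] (p : ℝ → X) : Prop :=
  ∃ K : Set X, IsCompact K ∧ ∃ ε₀ > 0, ∀ ε ∈ Iset, ε < ε₀ → p ε ∈ K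

section ManifoldDefs


/-- Local expression `ψ ∘ f ∘ φ⁻¹` of a map `f : X → Y` in charts. -/
def locExpr {n m : ℕ} {X Y : Type*} [TopologicalSpace X] [ChartedSpace (Eucl n) X]
    [TopologicalSpace Y] [ChartedSpace (Eucl m) Y]
    (φ : MChart n X) (ψ : MChart m Y) (f : X → Y) : Eucl n → Eucl m :=
  fun x => ψ.ph (f (φ.ph.symm x))

/-- Moderateness of a net of maps between manifolds: `(u_ε)_ε ∈ E_M[X,Y]`. -/
def EMod (n m : ℕ) {X Y : Type*} [TopologicalSpace X] [ChartedSpace (Eucl n) X]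
    [TopologicalSpace Y] [ChartedSpace (Eucl m) Y] (u : ℝ → X → Y) : Prop :=
  CBdd u ∧
  ∀ (k : ℕ) (φ : MChart n X) (ψ : MChart m Y) (L : Set X) (L' : Set Y),
    IsCompact L → L ⊆ φ.ph.source → IsCompact L' → L' ⊆ ψ.ph.source →
    ∃ N : ℕ, ∃ C > 0, ∃ ε₁ > 0, ∀ ε ∈ Iset, ε < ε₁ → ∀ p ∈ L, u ε p ∈ L' →
      ‖iteratedFDeriv ℝ k (locExpr φ ψ (u ε)) (φ.ph p)‖ ≤ C / ε ^ N

/-- Moderateness of a net of scalar functions: `(u_ε)_ε ∈ E_M(X)` (chartwise description). -/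
def EModScalar (n : ℕ) {X : Type*} [TopologicalSpace X] [ChartedSpace (Eucl n) X]
    (u : ℝ → X → ℝ) : Prop :=
  ∀ (k : ℕ) (φ : MChart n X) (L : Set X), IsCompact L → L ⊆ φ.ph.source →
    ∃ N : ℕ, ∃ C > 0, ∃ ε₁ > 0, ∀ ε ∈ Iset, ε < ε₁ → ∀ p ∈ L,
      ‖iteratedFDeriv ℝ k (fun x => u ε (φ.ph.symm x)) (φ.ph p)‖ ≤ C / ε ^ N

/-- Negligibility of a net of scalar functions: `(u_ε)_ε ∈ N(X)`. -/
def NeglScalar (n : ℕ) {X : Type*} [TopologicalSpace X] [ChartedSpace (Eucl n) X]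
    (u : ℝ → X → ℝ) : Prop :=
  EModScalar n u ∧
  ∀ K : Set X, IsCompact K → ∀ q : ℕ, ∃ C > 0, ∃ ε₁ > 0,
    ∀ ε ∈ Iset, ε < ε₁ → ∀ p ∈ K, |u ε p| ≤ C * ε ^ q

/-- A Riemannian metric on the manifold `Y`: a symmetric positive definite smooth `(0,2)`-tensor
field.  Smoothness is expressed by smoothness of the pulled back metric coefficients in every
chart. -/
structure RiemMetric (m : ℕ) (Y : Type*) [TopologicalSpace Y] [ChartedSpace (Eucl m) Y] where
  g : ∀ y : Y, TangentSpace (𝓡 m) y → TangentSpace (𝓡 m) y → ℝ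
  linear_left : ∀ y w, IsLinearMap ℝ (fun v => g y v w)
  symm : ∀ y v w, g y v w = g y w v
  posdef : ∀ y v, v ≠ 0 → 0 < g y v v
  smooth : ∀ (ψ : MChart m Y) (v w : Eucl m), ContDiffOn ℝ (⊤ : ℕ∞)
    (fun x => g (ψ.ph.symm x) (mfderiv (𝓡 m) (𝓡 m) ψ.ph.symm x v)
      (mfderiv (𝓡 m) (𝓡 m) ψ.ph.symm x w)) ψ.ph.target

variable {m : ℕ} {Z : Type*} [TopologicalSpace Z] [ChartedSpace (Eucl m) Z]

/-- Velocity vector of a curve in a manifold. -/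
def pathVel (γ : ℝ → Z) (t : ℝ) : TangentSpace (𝓡 m) (γ t) :=
  mfderiv 𝓘(ℝ, ℝ) (𝓡 m) γ t (1 : ℝ)

/-- Length of (the restriction to `[0,1]` of) a curve w.r.t. a Riemannian metric. -/
def pathLength (h : RiemMetric m Z) (γ : ℝ → Z) : ℝ :=
  ∫ t in (0:ℝ)..1, Real.sqrt (h.g (γ t) (pathVel γ t) (pathVel γ t))

/-- The geodesic distance induced by a Riemannian metric: the infimum of the lengths of smooth
curves joining the two points (`∞` if there is no such curve). -/
def riemDist (h : RiemMetric m Z) (p q : Z) : ℝ≥0∞ :=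
  ⨅ (γ : ℝ → Z) (_ : ContMDiff 𝓘(ℝ, ℝ) (𝓡 m) (⊤ : ℕ∞) γ) (_ : γ 0 = p) (_ : γ 1 = q),
    ENNReal.ofReal (pathLength h γ)

/-- Clause (i) of the definition of equivalence: the Riemannian distance of values tends to `0`
uniformly on compact sets. -/
def RiemClose (n m : ℕ) {X Y : Type*} [TopologicalSpace X] [ChartedSpace (Eucl n) X]
    [TopologicalSpace Y] [ChartedSpace (Eucl m) Y] (u v : ℝ → X → Y) : Prop :=
  ∀ h : RiemMetric m Y, ∀ K : Set X, IsCompact K → ∀ δ : ℝ, 0 < δ →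
    ∃ ε₁ > 0, ∀ ε ∈ Iset, ε < ε₁ → ∀ p ∈ K, riemDist h (u ε p) (v ε p) ≤ ENNReal.ofReal δ

/-- Clause (ii) of the definition of equivalence, for a fixed order `k` of differentiation. -/
def DerEst (n m : ℕ) {X Y : Type*} [TopologicalSpace X] [ChartedSpace (Eucl n) X]
    [TopologicalSpace Y] [ChartedSpace (Eucl m) Y] (u v : ℝ → X → Y) (k : ℕ) : Prop :=
  ∀ (q : ℕ) (φ : MChart n X) (ψ : MChart m Y) (L : Set X) (L' : Set Y),
    IsCompact L → L ⊆ φ.ph.source → IsCompact L' → L' ⊆ ψ.ph.source →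
    ∃ C > 0, ∃ ε₁ > 0, ∀ ε ∈ Iset, ε < ε₁ → ∀ p ∈ L, u ε p ∈ L' → v ε p ∈ L' →
      ‖iteratedFDeriv ℝ k (fun x => locExpr φ ψ (u ε) x - locExpr φ ψ (v ε) x) (φ.ph p)‖
        ≤ C * ε ^ q

/-- Equivalence `(u_ε)_ε ∼ (v_ε)_ε` of nets in `E_M[X,Y]`. -/
def MEqv (n m : ℕ) {X Y : Type*} [TopologicalSpace X] [ChartedSpace (Eucl n) X]
    [TopologicalSpace Y] [ChartedSpace (Eucl m) Y] (u v : ℝ → X → Y) : Prop :=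
  RiemClose n m u v ∧ ∀ k : ℕ, DerEst n m u v k

/-- Equivalence of order zero `(u_ε)_ε ∼₀ (v_ε)_ε`. -/
def MEqv0 (n m : ℕ) {X Y : Type*} [TopologicalSpace X] [ChartedSpace (Eucl n) X]
    [TopologicalSpace Y] [ChartedSpace (Eucl m) Y] (u v : ℝ → X → Y) : Prop :=
  RiemClose n m u v ∧ DerEst n m u v 0

/-- Equivalence of compactly supported point nets. -/
def PtEqv (n : ℕ) {X : Type*} [TopologicalSpace X] [ChartedSpace (Eucl n) X]
    (p q : ℝ → X) : Prop :=
  ∀ h : RiemMetric n X, ∀ mo : ℕ, ∃ C > 0, ∃ ε₁ > 0, ∀ ε ∈ Iset, ε < ε₁ →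
    riemDist h (p ε) (q ε) ≤ ENNReal.ofReal (C * ε ^ mo)

end ManifoldDefs



section Statements

variable {n m k : ℕ} {X Y Z : Type*}
  [TopologicalSpace X] [ChartedSpace (Eucl n) X] [IsManifold (𝓡 n) (⊤ : ℕ∞) X]
  [T2Space X] [SecondCountableTopology X]
  [TopologicalSpace Y] [ChartedSpace (Eucl m) Y] [IsManifold (𝓡 m) (⊤ : ℕ∞) Y]
  [T2Space Y] [SecondCountableTopology Y]
  [TopologicalSpace Z] [ChartedSpace (Eucl k) Z] [IsManifold (𝓡 k) (⊤ : ℕ∞) Z]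
  [T2Space Z] [SecondCountableTopology Z]

/-- Auxiliary: choose a strictly decreasing sequence `E j < 1/(j+1)` of positive reals with
`P j (E j)`, given that for every `j` suitable values exist below any positive threshold. -/
lemma exists_strictAnti_seq (P : ℕ → ℝ → Prop)
    (h : ∀ (j : ℕ) (δ : ℝ), 0 < δ → ∃ ε, 0 < ε ∧ ε < δ ∧ P j ε) :
    ∃ E : ℕ → ℝ, (∀ j, 0 < E j) ∧ (∀ j, E j < 1 / ((j : ℝ) + 1)) ∧ StrictAnti E ∧
      ∀ j, P j (E j) := by
  choose! F h1 h2 h3 using h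
  set E : ℕ → ℝ := fun j =>
    Nat.rec (F 0 1) (fun j e => F (j + 1) (min e (1 / ((j : ℝ) + 2)))) j with hEdef
  have hE0 : E 0 = F 0 1 := rfl
  have hEs : ∀ j : ℕ, E (j + 1) = F (j + 1) (min (E j) (1 / ((j : ℝ) + 2))) := fun _ => rfl
  have key : ∀ j : ℕ, 0 < E j ∧ E j < 1 / ((j : ℝ) + 1) ∧ P j (E j) := by
    intro j
    induction j with
    | zero =>
      rw [hE0]
      refine ⟨h1 0 1 one_pos, ?_, h3 0 1 one_pos⟩
      have := h2 0 1 one_pos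
      norm_num
      linarith
    | succ j ih =>
      have hδ : 0 < min (E j) (1 / ((j : ℝ) + 2)) := by
        refine lt_min ih.1 (by positivity)
      rw [hEs j]
      refine ⟨h1 _ _ hδ, ?_, h3 _ _ hδ⟩
      have h2' : F (j + 1) (min (E j) (1 / ((j : ℝ) + 2))) < 1 / ((j : ℝ) + 2) :=
        lt_of_lt_of_le (h2 (j + 1) _ hδ) (min_le_right _ _)
      have hcast : ((j + 1 : ℕ) : ℝ) + 1 = (j : ℝ) + 2 := by push_cast; ring
      rw [hcast]
      exact h2'
  have hanti : StrictAnti E := by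
    refine strictAnti_nat_of_succ_lt (fun j => ?_)
    have hδ : 0 < min (E j) (1 / ((j : ℝ) + 2)) := lt_min (key j).1 (by positivity)
    calc E (j + 1) < min (E j) (1 / ((j : ℝ) + 2)) := by rw [hEs j]; exact h2 _ _ hδ
    _ ≤ E j := min_le_left _ _
  exact ⟨E, fun j => (key j).1, fun j => (key j).2.1, hanti, fun j => (key j).2.2⟩

/-- Auxiliary: on a σ-compact manifold, given points `y j` escaping a compact exhaustion,
there is a smooth nonnegative function whose value at `y j` is at least `a j`. -/
lemma exists_smooth_large_at_escaping {m : ℕ} {Y : Type*}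
    [TopologicalSpace Y] [ChartedSpace (Eucl m) Y] [IsManifold (𝓡 m) (⊤ : ℕ∞) Y]
    [T2Space Y] [SigmaCompactSpace Y] [LocallyCompactSpace Y]
    (C : CompactExhaustion Y) (y : ℕ → Y) (hy : ∀ j, y j ∉ C j)
    (a : ℕ → ℝ) (ha : ∀ j, 0 ≤ a j) :
    ∃ F : Y → ℝ, ContMDiff (𝓡 m) 𝓘(ℝ, ℝ) (⊤ : ℕ∞) F ∧ (∀ z, 0 ≤ F z) ∧ ∀ j, a j ≤ F (y j) := by
  have hg : ∀ j : ℕ, ∃ g : Y → ℝ, ContMDiff (𝓡 m) 𝓘(ℝ, ℝ) (⊤ : ℕ∞) g ∧ Set.EqOn g 0 (C j) ∧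
      g (y j) = 1 ∧ ∀ z, g z ∈ Set.Icc (0 : ℝ) 1 := by
    intro j
    obtain ⟨g, hg0, hg1, hg01⟩ := exists_contMDiffMap_zero_one_of_isClosed (𝓡 m) (n := (⊤ : ℕ∞))
      (C.isCompact j).isClosed (isClosed_singleton (x := y j))
      (Set.disjoint_singleton_right.2 (hy j))
    exact ⟨g, g.contMDiff, hg0, by simpa using hg1 rfl, hg01⟩
  choose g hgsm hg0 hg1 hg01 using hg
  -- the family of supports is locally finite
  have hsupp : ∀ j : ℕ, (Function.support fun z => a j * g j z) ⊆ (C j)ᶜ := by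
    intro j z hz hzC
    have h0 : g j z = 0 := hg0 j hzC
    exact Function.mem_support.1 hz (by rw [h0, mul_zero])
  have hlf : LocallyFinite fun j => Function.support fun z => a j * g j z := by
    intro z
    obtain ⟨J, hJ⟩ := C.exists_mem z
    refine ⟨interior (C (J + 1)), isOpen_interior.mem_nhds (C.subset_interior_succ J hJ), ?_⟩
    refine Set.Finite.subset (Set.finite_Iio (J + 1)) ?_
    intro j hj
    obtain ⟨w, hw1, hw2⟩ := hj
    by_contra hjlt
    rw [Set.mem_Iio, not_lt] at hjlt
    have : w ∈ C j := C.subset hjlt (interior_subset hw2)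
    exact hsupp j hw1 this
  refine ⟨fun z => ∑ᶠ j, a j * g j z, ?_, ?_, ?_⟩
  · exact contMDiff_finsum (fun j => contMDiff_const.mul (hgsm j)) hlf
  · intro z
    exact finsum_nonneg fun j => mul_nonneg (ha j) (hg01 j z).1
  · intro j
    have hfin : (Function.support fun k => a k * g k (y j)).Finite := hlf.point_finite (y j)
    have := single_le_finsum j hfin (fun k => mul_nonneg (ha k) (hg01 k (y j)).1)
    rwa [hg1 j, mul_one] at this

theorem stmt0 (u : ℝ → X → Y) (hu : ∀ ε ∈ Iset, ContMDiff (𝓡 n) (𝓡 m) (⊤ : ℕ∞) (u ε)) :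
    List.TFAE
      [CBdd u,
       ∀ f : Y → ℝ, ContMDiff (𝓡 m) 𝓘(ℝ, ℝ) (⊤ : ℕ∞) f → CBdd (fun ε p => f (u ε p)),
       ∀ f : Y → ℝ, ContMDiff (𝓡 m) 𝓘(ℝ, ℝ) (⊤ : ℕ∞) f → ∀ K : Set X, IsCompact K →
         ∃ N : ℕ, ∃ C > 0, ∃ ε₁ > 0, ∀ ε ∈ Iset, ε < ε₁ → ∀ p ∈ K, |f (u ε p)| ≤ C / ε ^ N,
       ∀ x : ℝ → X, CptSupp x → CptSupp (fun ε => u ε (x ε))] := by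
  haveI : LocallyCompactSpace Y := ChartedSpace.locallyCompactSpace (Eucl m) Y
  set C : CompactExhaustion Y := CompactExhaustion.choice Y with hC
  tfae_have 1 → 2 := by
    intro h1 f hf K hK
    obtain ⟨ε₀, hε₀, K', hK', hmem⟩ := h1 K hK
    exact ⟨ε₀, hε₀, f '' K', hK'.image hf.continuous,
      fun ε hε hεlt p hp => ⟨_, hmem ε hε hεlt p hp, rfl⟩⟩
  tfae_have 2 → 3 := by
    intro h2 f hf K hK
    obtain ⟨ε₀, hε₀, K'', hK'', hmem⟩ := h2 f hf K hK
    obtain ⟨B, hB⟩ := isBounded_iff_forall_norm_le.1 hK''.isBounded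
    refine ⟨0, max B 1, lt_of_lt_of_le one_pos (le_max_right _ _), ε₀, hε₀,
      fun ε hε hεlt p hp => ?_⟩
    have := hB _ (hmem ε hε hεlt p hp)
    rw [Real.norm_eq_abs] at this
    calc |f (u ε p)| ≤ B := this
    _ ≤ max B 1 := le_max_left _ _
    _ = max B 1 / ε ^ 0 := by rw [pow_zero, div_one]
  tfae_have 3 → 4 := by
    intro h3 x hx
    obtain ⟨K, hK, εx, hεx, hxK⟩ := hx
    by_contra hcon
    rw [CptSupp] at hcon
    push_neg at hcon
    have hsel : ∀ j : ℕ, ∃ ε, ε ∈ Iset ∧ ε < min εx (1 / ((j : ℝ) + 1)) ∧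
        u ε (x ε) ∉ C j := by
      intro j
      obtain ⟨ε, hε1, hε2, hε3⟩ := hcon (C j) (C.isCompact j) (min εx (1 / ((j : ℝ) + 1)))
        (lt_min hεx (by positivity))
      exact ⟨ε, hε1, hε2, hε3⟩
    choose E hE1 hE2 hE3 using hsel
    have hEpos : ∀ j, 0 < E j := fun j => (hE1 j).1
    have hElt : ∀ j, E j < 1 / ((j : ℝ) + 1) := fun j => lt_of_lt_of_le (hE2 j) (min_le_right _ _)
    have hEx : ∀ j, E j < εx := fun j => lt_of_lt_of_le (hE2 j) (min_le_left _ _)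
    obtain ⟨F, hFsm, hFnn, hFval⟩ := exists_smooth_large_at_escaping (m := m) C
      (fun j => u (E j) (x (E j))) hE3 (fun j => (E j)⁻¹ ^ j)
      (fun j => pow_nonneg (inv_nonneg.2 (hEpos j).le) j)
    obtain ⟨N, Cc, hCc, ε₁, hε₁, hbound⟩ := h3 F hFsm K hK
    -- pick a large index j
    obtain ⟨j, hj⟩ := exists_nat_gt (max Cc (1 / ε₁) + (N : ℝ) + 1)
    have hjC : Cc < (j : ℝ) := lt_of_le_of_lt (by
      have := le_max_left Cc (1 / ε₁); linarith) hj
    have hjε : 1 / ε₁ < (j : ℝ) := lt_of_le_of_lt (by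
      have := le_max_right Cc (1 / ε₁); linarith) hj
    have hjN : (N : ℝ) + 1 ≤ (j : ℝ) := by
      have := le_max_left Cc (1 / ε₁)
      have h0 : 0 ≤ max Cc (1 / ε₁) := le_trans hCc.le (le_max_left _ _)
      linarith
    have hjNnat : N + 1 ≤ j := by exact_mod_cast hjN
    have hEε₁ : E j < ε₁ := by
      have h1 : 1 / ((j : ℝ) + 1) < ε₁ := by
        rw [div_lt_iff₀ (by positivity)]
        rw [div_lt_iff₀ hε₁] at hjε
        nlinarith
      exact lt_trans (hElt j) h1
    have hpK : x (E j) ∈ K := hxK (E j) (hE1 j) (hEx j)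
    have hb := hbound (E j) (hE1 j) hEε₁ (x (E j)) hpK
    -- derive the contradiction
    set t : ℝ := (E j)⁻¹ with ht
    have htpos : 0 < t := inv_pos.2 (hEpos j)
    have htj : (j : ℝ) + 1 < t := by
      have h := hElt j
      rw [lt_div_iff₀ (by positivity : (0:ℝ) < (j : ℝ) + 1)] at h
      have hmul : ((j : ℝ) + 1) * E j < (E j)⁻¹ * E j := by
        rw [inv_mul_cancel₀ (ne_of_gt (hEpos j))]
        have := mul_comm (E j) ((j : ℝ) + 1)
        linarith
      exact lt_of_mul_lt_mul_right hmul (hEpos j).le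
    have ht1 : 1 ≤ t := by
      have : (0 : ℝ) ≤ (j : ℝ) := Nat.cast_nonneg j
      linarith
    have hFlb : t ^ j ≤ Cc / (E j) ^ N := by
      refine le_trans ?_ hb
      refine le_trans (hFval j) (le_abs_self _)
    have hdiv : Cc / (E j) ^ N = Cc * t ^ N := by
      rw [ht, inv_pow, div_eq_mul_inv]
    rw [hdiv] at hFlb
    have hstep : t ^ N * t ≤ t ^ j := by
      calc t ^ N * t = t ^ (N + 1) := (pow_succ t N).symm
      _ ≤ t ^ j := pow_le_pow_right₀ ht1 hjNnat
    have : t ^ N * t ≤ Cc * t ^ N := le_trans hstep hFlb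
    have htle : t ≤ Cc := by
      have hpw : 0 < t ^ N := pow_pos htpos N
      rw [mul_comm Cc (t ^ N)] at this
      exact le_of_mul_le_mul_left this hpw
    have : (0 : ℝ) ≤ (j : ℝ) := Nat.cast_nonneg j
    linarith
  tfae_have 4 → 1 := by
    intro h4
    by_contra hcon
    rw [CBdd] at hcon
    push_neg at hcon
    obtain ⟨K, hK, hbad⟩ := hcon
    have hsel : ∀ (j : ℕ) (δ : ℝ), 0 < δ →
        ∃ ε, 0 < ε ∧ ε < δ ∧ (ε ≤ 1 ∧ ∃ p ∈ K, u ε p ∉ C j) := by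
      intro j δ hδ
      obtain ⟨ε, hε1, hε2, p, hp1, hp2⟩ := hbad (min δ 1) (lt_min hδ one_pos) (C j)
        (C.isCompact j)
      exact ⟨ε, hε1.1, lt_of_lt_of_le hε2 (min_le_left _ _), hε1.2, p, hp1, hp2⟩
    obtain ⟨E, hEpos, hElt, hEanti, hEP⟩ := exists_strictAnti_seq _ hsel
    have hE1 : ∀ j, E j ≤ 1 := fun j => (hEP j).1
    choose p hpK hpout using fun j => (hEP j).2
    classical
    set x : ℝ → X := fun ε => if h : ∃ j, E j = ε then p h.choose else p 0 with hxdef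
    have hxK : ∀ ε, x ε ∈ K := by
      intro ε
      simp only [hxdef]
      split_ifs with h
      · exact hpK _
      · exact hpK 0
    have hxE : ∀ j, x (E j) = p j := by
      intro j
      have h : ∃ k, E k = E j := ⟨j, rfl⟩
      simp only [hxdef]
      rw [dif_pos h]
      exact congrArg p (hEanti.injective h.choose_spec)
    obtain ⟨K', hK', ε₀', hε₀', hmem⟩ := h4 x ⟨K, hK, 1, one_pos, fun ε _ _ => hxK ε⟩
    obtain ⟨J, hJ⟩ := C.exists_superset_of_isCompact hK'
    obtain ⟨j0, hj0⟩ := exists_nat_gt (1 / ε₀')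
    set j : ℕ := max j0 J with hjdef
    have hjε : E j < ε₀' := by
      have h1 : 1 / ε₀' < (j : ℝ) + 1 := by
        have : (j0 : ℝ) ≤ (j : ℝ) := by exact_mod_cast le_max_left j0 J
        linarith
      have h2 : 1 / ((j : ℝ) + 1) < ε₀' := by
        rw [div_lt_iff₀ (by positivity)]
        rw [div_lt_iff₀ hε₀'] at h1
        nlinarith
      exact lt_trans (hElt j) h2
    have hmem' : u (E j) (p j) ∈ K' := by
      have h := hmem (E j) ⟨hEpos j, hE1 j⟩ hjε
      simpa only [hxE j] using h
    exact hpout j (C.subset (le_max_right j0 J) (hJ hmem'))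
  tfae_finish

end Statements
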